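/- Let $(\psi_n)$ be a nonincreasing sequence of bounded continuous real-valued functions on a compact metric space $E$ converging pointwise to a bounded usc function $\psi^*$. For bounded functions $\phi$ on $E$, let $V[\phi](t,x) = \inf_{\alpha} \sup_{\theta \in [t,T]} \{\tfrac12\int_t^\theta |\alpha_s|^2 ds + \phi(\theta, Y^{t,x,\alpha}_\theta)\}$, where the path map $Y$ is as in the mixed control/stopping problem. Assume $\eta$-optimal controls exist and paths $\theta \mapsto Y^{t,x,\alpha}_\theta$ are continuous. Then $V[\psi^*] = \lim_{n} \downarrow V[\psi_n]$ pointwise. -/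

import Mathlib

/-!
For a fixed control, the continuous payoffs `θ ↦ C α θ + ψ n (θ, Y α θ)` decrease pointwise to
the payoff of `ψ*`. On the compact interval `[t, T]` their suprema then decrease to the supremum
of the limit: if all suprema stay above `L`, the closed sets `{θ | L ≤ payoff_n θ}` are nested and
nonempty, so they share a point, at which the limit payoff is at least `L`. Finally, an infimum
over controls commutes with a decreasing limit, since both are infima.
-/

open Set Filter
open scoped Topology

/-- The inf-sup value of the mixed control/stopping problem at a fixed starting point,
with obstacle `φ`: `V[φ] = inf_α sup_{θ∈[t,T]} { C(α,θ) + φ(θ, Y^α_θ) }`, where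
`C(α,θ)` stands for `½∫_t^θ |α_s|² ds`. -/
noncomputable def Vval {S : Type*} {Ctrl : Type*} (t T : ℝ) (A : Set Ctrl)
    (C : Ctrl → ℝ → ℝ) (Y : Ctrl → ℝ → S) (φ : ℝ × S → ℝ) : ℝ :=
  sInf ((fun α => sSup ((fun θ => C α θ + φ (θ, Y α θ)) '' Icc t T)) '' A)

section Order

variable {ι β : Type*} [ConditionallyCompleteLinearOrder β]

theorem bddBelow_image_of_le {A : Set ι} {f g : ι → β} (hf : BddBelow (f '' A))
    (hle : ∀ α ∈ A, f α ≤ g α) : BddBelow (g '' A) := by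
  obtain ⟨m, hm⟩ := hf
  exact ⟨m, forall_mem_image.2 fun α hα => (hm (mem_image_of_mem f hα)).trans (hle α hα)⟩

theorem antitone_csInf_image {A : Set ι} (hA : A.Nonempty) {g : ℕ → ι → β}
    (hanti : ∀ α ∈ A, Antitone fun n => g n α) (hbdd : ∀ n, BddBelow (g n '' A)) :
    Antitone fun n => sInf (g n '' A) := fun _ n hmn =>
  le_csInf (hA.image _) <| forall_mem_image.2 fun α hα =>
    (csInf_le (hbdd n) (mem_image_of_mem _ hα)).trans (hanti α hα hmn)

theorem antitone_csSup_image {K : Set ι} (hK : K.Nonempty) {h : ℕ → ι → β}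
    (hanti : ∀ x ∈ K, Antitone fun n => h n x) (hbdd : ∀ n, BddAbove (h n '' K)) :
    Antitone fun n => sSup (h n '' K) := fun m _ hmn =>
  csSup_le (hK.image _) <| forall_mem_image.2 fun x hx =>
    (hanti x hx hmn).trans (le_csSup (hbdd m) (mem_image_of_mem _ hx))

variable [TopologicalSpace β] [OrderTopology β]

theorem tendsto_csInf_image_of_antitone {A : Set ι} (hA : A.Nonempty) {g : ℕ → ι → β}
    {G : ι → β} (hanti : ∀ α ∈ A, Antitone fun n => g n α)
    (hlim : ∀ α ∈ A, Tendsto (fun n => g n α) atTop (𝓝 (G α))) (hG : BddBelow (G '' A)) :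
    Tendsto (fun n => sInf (g n '' A)) atTop (𝓝 (sInf (G '' A))) := by
  have hle : ∀ n, ∀ α ∈ A, G α ≤ g n α := fun n α hα =>
    (hanti α hα).le_of_tendsto (hlim α hα) n
  have hbdd : ∀ n, BddBelow (g n '' A) := fun n => bddBelow_image_of_le hG (hle n)
  have hlower : ∀ n, sInf (G '' A) ≤ sInf (g n '' A) := fun n =>
    le_csInf (hA.image _) <| forall_mem_image.2 fun α hα =>
      (csInf_le hG (mem_image_of_mem _ hα)).trans (hle n α hα)
  have hrange : BddBelow (range fun n => sInf (g n '' A)) := ⟨_, forall_mem_range.2 hlower⟩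
  convert tendsto_atTop_ciInf (antitone_csInf_image hA hanti hbdd) hrange using 2
  refine le_antisymm (le_ciInf hlower) (le_csInf (hA.image _) (forall_mem_image.2 fun α hα => ?_))
  exact ge_of_tendsto' (hlim α hα) fun n =>
    (ciInf_le hrange n).trans (csInf_le (hbdd n) (mem_image_of_mem _ hα))

theorem tendsto_csSup_image_of_antitone {X : Type*} [TopologicalSpace X] {K : Set X}
    (hK : IsCompact K) (hne : K.Nonempty) {h : ℕ → X → β} {f : X → β}
    (hc : ∀ n, Continuous (h n)) (hanti : ∀ x ∈ K, Antitone fun n => h n x)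
    (hlim : ∀ x ∈ K, Tendsto (fun n => h n x) atTop (𝓝 (f x))) :
    Tendsto (fun n => sSup (h n '' K)) atTop (𝓝 (sSup (f '' K))) := by
  have hle : ∀ n, ∀ x ∈ K, f x ≤ h n x := fun n x hx =>
    (hanti x hx).le_of_tendsto (hlim x hx) n
  have hbdd : ∀ n, BddAbove (h n '' K) := fun n => (hK.image (hc n)).bddAbove
  have hfbdd : BddAbove (f '' K) := by
    obtain ⟨m, hm⟩ := hbdd 0
    exact ⟨m, forall_mem_image.2 fun x hx => (hle 0 x hx).trans (hm (mem_image_of_mem _ hx))⟩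
  have hlower : ∀ n, sSup (f '' K) ≤ sSup (h n '' K) := fun n =>
    csSup_le (hne.image _) <| forall_mem_image.2 fun x hx =>
      (hle n x hx).trans (le_csSup (hbdd n) (mem_image_of_mem _ hx))
  have hrange : BddBelow (range fun n => sSup (h n '' K)) := ⟨_, forall_mem_range.2 hlower⟩
  convert tendsto_atTop_ciInf (antitone_csSup_image hne hanti hbdd) hrange using 2
  refine le_antisymm (le_ciInf hlower) ?_
  set L := ⨅ n, sSup (h n '' K)
  obtain ⟨x, hxK, hxL⟩ : (K ∩ ⋂ n, h n ⁻¹' Ici L).Nonempty := by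
    refine hK.inter_iInter_nonempty _ (fun n => isClosed_Ici.preimage (hc n)) fun u => ?_
    obtain ⟨x, hxK, hx⟩ := (hK.image (hc (u.sup id))).sSup_mem (hne.image _)
    refine ⟨x, hxK, mem_iInter₂.2 fun n hn => ?_⟩
    calc L ≤ sSup (h (u.sup id) '' K) := ciInf_le hrange _
      _ = h (u.sup id) x := hx.symm
      _ ≤ h n x := hanti x hxK (Finset.le_sup (f := id) hn)
  calc L ≤ f x := ge_of_tendsto' (hlim x hxK) fun n => mem_iInter.1 hxL n
    _ ≤ sSup (f '' K) := le_csSup hfbdd (mem_image_of_mem _ hxK)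

end Order

section StoppingPayoff

variable {S Ctrl : Type*} (t T : ℝ) (C : Ctrl → ℝ → ℝ) (Y : Ctrl → ℝ → S)

noncomputable def supPayoff (φ : ℝ × S → ℝ) (α : Ctrl) : ℝ :=
  sSup ((fun θ => C α θ + φ (θ, Y α θ)) '' Icc t T)

theorem Vval_eq_csInf_supPayoff (A : Set Ctrl) (φ : ℝ × S → ℝ) :
    Vval t T A C Y φ = sInf (supPayoff t T C Y φ '' A) := rfl

variable {t T C Y}

theorem bddBelow_supPayoff_image (htT : t ≤ T) {A : Set Ctrl} (hC0 : ∀ α ∈ A, 0 ≤ C α t)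
    (hCc : ∀ α ∈ A, Continuous (C α)) {φ : ℝ × S → ℝ} {M : ℝ} (hM : ∀ p, |φ p| ≤ M) :
    BddBelow (supPayoff t T C Y φ '' A) := by
  refine ⟨-M, forall_mem_image.2 fun α hα => ?_⟩
  obtain ⟨K, hK⟩ := isCompact_Icc.bddAbove_image (hCc α hα).continuousOn
  have hbdd : BddAbove ((fun θ => C α θ + φ (θ, Y α θ)) '' Icc t T) :=
    ⟨K + M, forall_mem_image.2 fun θ hθ =>
      add_le_add (hK (mem_image_of_mem _ hθ)) (abs_le.1 (hM _)).2⟩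
  calc -M ≤ C α t + φ (t, Y α t) := by linarith [hC0 α hα, (abs_le.1 (hM (t, Y α t))).1]
    _ ≤ supPayoff t T C Y φ α := le_csSup hbdd (mem_image_of_mem _ ⟨le_rfl, htT⟩)

variable [TopologicalSpace S] {ψ : ℕ → ℝ × S → ℝ} {α : Ctrl}

theorem antitone_supPayoff (htT : t ≤ T) (hC : Continuous (C α)) (hY : Continuous (Y α))
    (hψc : ∀ n, Continuous (ψ n)) (hanti : ∀ p, Antitone fun n => ψ n p) :
    Antitone fun n => supPayoff t T C Y (ψ n) α :=
  antitone_csSup_image (nonempty_Icc.2 htT) (fun _ _ _ _ hmn => add_le_add_right (hanti _ hmn) _)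
    fun n => isCompact_Icc.bddAbove_image
      (hC.add ((hψc n).comp (continuous_id.prodMk hY))).continuousOn

theorem tendsto_supPayoff (htT : t ≤ T) (hC : Continuous (C α)) (hY : Continuous (Y α))
    (hψc : ∀ n, Continuous (ψ n)) (hanti : ∀ p, Antitone fun n => ψ n p) {ψs : ℝ × S → ℝ}
    (hlim : ∀ p, Tendsto (fun n => ψ n p) atTop (𝓝 (ψs p))) :
    Tendsto (fun n => supPayoff t T C Y (ψ n) α) atTop (𝓝 (supPayoff t T C Y ψs α)) :=
  tendsto_csSup_image_of_antitone isCompact_Icc (nonempty_Icc.2 htT)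
    (fun n => hC.add ((hψc n).comp (continuous_id.prodMk hY)))
    (fun _ _ _ _ hmn => add_le_add_right (hanti _ hmn) _) fun _ _ => (hlim _).const_add _

end StoppingPayoff

theorem stmt10_general {S : Type*} [MetricSpace S] {Ctrl : Type*}
    (t T : ℝ) (htT : t ≤ T)
    (A : Set Ctrl) (hA : A.Nonempty)
    (C : Ctrl → ℝ → ℝ) (hC0 : ∀ α θ, 0 ≤ C α θ) (hCc : ∀ α ∈ A, Continuous (C α))
    (Y : Ctrl → ℝ → S) (hY : ∀ α ∈ A, Continuous (Y α))
    (ψ : ℕ → ℝ × S → ℝ)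
    (hψc : ∀ n, Continuous (ψ n))
    (hmono : ∀ n p, ψ (n + 1) p ≤ ψ n p)
    (ψs : ℝ × S → ℝ)
    (hψsb : ∃ M, ∀ p, |ψs p| ≤ M)
    (hlim : ∀ p, Tendsto (fun n => ψ n p) atTop (𝓝 (ψs p))) :
    Tendsto (fun n => Vval t T A C Y (ψ n)) atTop (𝓝 (Vval t T A C Y ψs)) ∧
      Antitone fun n => Vval t T A C Y (ψ n) := by
  obtain ⟨M, hM⟩ := hψsb
  have hanti : ∀ p, Antitone fun n => ψ n p := fun p => antitone_nat_of_succ_le fun n => hmono n p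
  have hpay_anti : ∀ α ∈ A, Antitone fun n => supPayoff t T C Y (ψ n) α := fun α hα =>
    antitone_supPayoff htT (hCc α hα) (hY α hα) hψc hanti
  have hpay_lim : ∀ α ∈ A, Tendsto (fun n => supPayoff t T C Y (ψ n) α) atTop
      (𝓝 (supPayoff t T C Y ψs α)) := fun α hα =>
    tendsto_supPayoff htT (hCc α hα) (hY α hα) hψc hanti hlim
  have hbdd : BddBelow (supPayoff t T C Y ψs '' A) :=
    bddBelow_supPayoff_image htT (fun α _ => hC0 α t) hCc hM
  simp only [Vval_eq_csInf_supPayoff]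
  refine ⟨tendsto_csInf_image_of_antitone hA hpay_anti hpay_lim hbdd,
    antitone_csInf_image hA hpay_anti fun n => bddBelow_image_of_le hbdd fun α hα => ?_⟩
  exact (hpay_anti α hα).le_of_tendsto (hpay_lim α hα) n

/-- Lemma C.3: if a nonincreasing sequence of bounded continuous obstacles `ψ n`
converges pointwise to a bounded usc obstacle `ψ*` on the compact state space, then the
value functions converge monotonically: `V[ψ*] = lim ↓ V[ψ n]`. -/
theorem stmt10 {S : Type*} [MetricSpace S] [CompactSpace S] {Ctrl : Type*}
    (t T : ℝ) (htT : t ≤ T)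
    (A : Set Ctrl) (hA : A.Nonempty)
    (C : Ctrl → ℝ → ℝ) (hC0 : ∀ α θ, 0 ≤ C α θ) (hCc : ∀ α ∈ A, Continuous (C α))
    (Y : Ctrl → ℝ → S) (hY : ∀ α ∈ A, Continuous (Y α))
    (ψ : ℕ → ℝ × S → ℝ)
    (hψc : ∀ n, Continuous (ψ n))
    (hψb : ∀ n, ∃ M, ∀ p, |ψ n p| ≤ M)
    (hmono : ∀ n p, ψ (n + 1) p ≤ ψ n p)
    (ψs : ℝ × S → ℝ)
    (hψs : UpperSemicontinuous ψs)
    (hψsb : ∃ M, ∀ p, |ψs p| ≤ M)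
    (hlim : ∀ p, Tendsto (fun n => ψ n p) atTop (𝓝 (ψs p))) :
    Tendsto (fun n => Vval t T A C Y (ψ n)) atTop (𝓝 (Vval t T A C Y ψs)) ∧
      Antitone fun n => Vval t T A C Y (ψ n) :=
  stmt10_general t T htT A hA C hC0 hCc Y hY ψ hψc hmono ψs hψsb hlim
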